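/- Let 𝔤 be a finite-dimensional real Lie algebra with an inner product G. Define Ric_G ∈ Sym²𝔤* by Ric_G(x,y) = −(1/2) Σ_i G([x,e_i],[y,e_i]) + (1/4) Σ_{i,j} G([e_i,e_j],x) G([e_i,e_j],y) for an orthonormal basis {e_i}, and Rc_G = G⁻¹Ric_G ∈ End 𝔤. Define δ(A)(x,y) = A[x,y] − [Ax,y] − [x,Ay]. Then for every A ∈ End 𝔤: ⟨Rc_G, A⟩ = (1/4)⟨δ(A), [·,·]⟩, where the inner products are the induced ones on End 𝔤 (Hilbert–Schmidt) and on Λ²𝔤* ⊗ 𝔤. -/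
import Mathlib


open Matrix

namespace RFN

variable {n : ℕ}

/-- Bracket determined by structure constants: `[e i, e j] = ∑ k, c i j k • e k`. -/
def bra (c : Fin n → Fin n → Fin n → ℝ) (x y : Fin n → ℝ) : Fin n → ℝ :=
  fun k => ∑ i, ∑ j, x i * y j * c i j k

/-- `c` is a family of structure constants of a Lie algebra. -/
def IsLieSC (c : Fin n → Fin n → Fin n → ℝ) : Prop :=
  (∀ i j k, c i j k = - c j i k) ∧
  ∀ x y z, bra c (bra c x y) z + bra c (bra c y z) x + bra c (bra c z x) y = 0

def adIter (c : Fin n → Fin n → Fin n → ℝ) (v : ℕ → Fin n → ℝ) :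
    ℕ → (Fin n → ℝ) → (Fin n → ℝ)
  | 0, x => x
  | m + 1, x => bra c (v m) (adIter c v m x)

/-- Nilpotency of the Lie algebra with structure constants `c`. -/
def IsNilpotentSC (c : Fin n → Fin n → Fin n → ℝ) : Prop :=
  ∃ N : ℕ, ∀ v x, adIter c v N x = 0

/-- Inner product of vectors with respect to the metric matrix `G`. -/
def gdot (G : Matrix (Fin n) (Fin n) ℝ) (x y : Fin n → ℝ) : ℝ :=
  ∑ i, ∑ j, x i * G i j * y j

/-- Components of the Ricci bilinear form of the invariant metric `G`:
`Ric_G(x,y) = -(1/2) Σ G([x,e_i],[y,e_j])G^{ij} + (1/4) Σ G^{ip}G^{jq}G([e_i,e_j],x)G([e_p,e_q],y)`. -/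
noncomputable def Ricm (c : Fin n → Fin n → Fin n → ℝ) (G : Matrix (Fin n) (Fin n) ℝ) :
    Matrix (Fin n) (Fin n) ℝ :=
  Matrix.of fun a b =>
    -(1/2) * (∑ i, ∑ j, G⁻¹ i j * gdot G (c a i) (c b j))
    + (1/4) * (∑ i, ∑ j, ∑ p, ∑ q, G⁻¹ i p * G⁻¹ j q *
        (∑ k, c i j k * G k a) * (∑ l, c p q l * G l b))

/-- Scalar curvature `R_G = -(1/4)|[·,·]|²_G`. -/
noncomputable def scalR (c : Fin n → Fin n → Fin n → ℝ) (G : Matrix (Fin n) (Fin n) ℝ) : ℝ :=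
  -(1/4) * (∑ i, ∑ j, ∑ p, ∑ q, G⁻¹ i p * G⁻¹ j q * gdot G (c i j) (c p q))

/-- Ricci endomorphism `Rc_G = G⁻¹ Ric_G`. -/
noncomputable def Rc (c : Fin n → Fin n → Fin n → ℝ) (G : Matrix (Fin n) (Fin n) ℝ) :
    Matrix (Fin n) (Fin n) ℝ := G⁻¹ * Ricm c G

/-- `δ(A)(e_i,e_j) = A[e_i,e_j] - [A e_i, e_j] - [e_i, A e_j]` (components). -/
def deltaE (c : Fin n → Fin n → Fin n → ℝ) (A : Matrix (Fin n) (Fin n) ℝ) :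
    Fin n → Fin n → Fin n → ℝ :=
  fun i j k => (∑ l, A k l * c i j l) - (∑ l, A l i * c l j k) - (∑ l, A l j * c i l k)

/-- The inner product on `Λ²𝔤*⊗𝔤` induced by `G` (full sum over ordered pairs). -/
noncomputable def tinner (G : Matrix (Fin n) (Fin n) ℝ) (μ ν : Fin n → Fin n → Fin n → ℝ) : ℝ :=
  ∑ i, ∑ j, ∑ p, ∑ q, G⁻¹ i p * G⁻¹ j q * gdot G (μ i j) (ν p q)

/-- The (Hilbert–Schmidt) inner product of endomorphisms induced by `G`. -/
noncomputable def einner (G : Matrix (Fin n) (Fin n) ℝ) (A B : Matrix (Fin n) (Fin n) ℝ) : ℝ :=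
  ∑ i, ∑ j, G⁻¹ i j * gdot G (fun k => A k i) (fun k => B k j)

/-- The inner product of bilinear forms induced by `G`. -/
noncomputable def binner (G : Matrix (Fin n) (Fin n) ℝ) (S T : Matrix (Fin n) (Fin n) ℝ) : ℝ :=
  ∑ i, ∑ j, ∑ p, ∑ q, G⁻¹ i p * G⁻¹ j q * S i j * T p q

/-- `|Ric_G|²`. -/
noncomputable def ric2 (c : Fin n → Fin n → Fin n → ℝ) (G : Matrix (Fin n) (Fin n) ℝ) : ℝ :=
  binner G (Ricm c G) (Ricm c G)

/-- The functional `W₊(G,τ) = τ R_G + τ² |Ric_G|²`. -/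
noncomputable def Wplus (c : Fin n → Fin n → Fin n → ℝ) (G : Matrix (Fin n) (Fin n) ℝ) (τ : ℝ) : ℝ :=
  τ * scalR c G + τ ^ 2 * ric2 c G

/-- Structure constants of the 3-dimensional Heisenberg Lie algebra: `[e₀,e₁] = e₂`, `e₂` central. -/
def heis : Fin 3 → Fin 3 → Fin 3 → ℝ := fun i j k =>
  if i = 0 ∧ j = 1 ∧ k = 2 then 1 else if i = 1 ∧ j = 0 ∧ k = 2 then -1 else 0

end RFN

open RFN Matrix

namespace Stmt3Aux

abbrev I7 (n : ℕ) : Type :=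
  Fin n × Fin n × Fin n × Fin n × Fin n × Fin n × Fin n

variable {n : ℕ}

def F1 (c : Fin n → Fin n → Fin n → ℝ) (B G A : Matrix (Fin n) (Fin n) ℝ) : I7 n → ℝ
  | (i, j, l, p, q, k, m) => B i j * A l j * B p q * c l p k * G k m * c i q m

def F2u (c : Fin n → Fin n → Fin n → ℝ) (B G A : Matrix (Fin n) (Fin n) ℝ) : I7 n → ℝ
  | (i, j, l, p, q, r, s) =>
      B i j * A l j * B p r * B q s * (∑ k, c p q k * G k l) * (∑ m, c r s m * G m i)

def F2v (c : Fin n → Fin n → Fin n → ℝ) (B G A : Matrix (Fin n) (Fin n) ℝ) : I7 n → ℝ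
  | (p, q, r, s, l, j, i) =>
      B i j * A l j * B p r * B q s * (∑ k, c p q k * G k l) * (∑ m, c r s m * G m i)

def F2 (c : Fin n → Fin n → Fin n → ℝ) (B G A : Matrix (Fin n) (Fin n) ℝ) : I7 n → ℝ
  | (p, q, r, s, l, j, k) => B p r * B q s * c p q k * G k l * A l j * c r s j

def Fg1 (c : Fin n → Fin n → Fin n → ℝ) (B G A : Matrix (Fin n) (Fin n) ℝ) : I7 n → ℝ
  | (i, j, p, q, k, m, l) => B i p * B j q * (A k l * c i j l) * G k m * c p q m

def Fg2 (c : Fin n → Fin n → Fin n → ℝ) (B G A : Matrix (Fin n) (Fin n) ℝ) : I7 n → ℝ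
  | (i, j, p, q, k, m, l) => B i p * B j q * (A l i * c l j k) * G k m * c p q m

def Fg3 (c : Fin n → Fin n → Fin n → ℝ) (B G A : Matrix (Fin n) (Fin n) ℝ) : I7 n → ℝ
  | (i, j, p, q, k, m, l) => B i p * B j q * (A l j * c i l k) * G k m * c p q m

end Stmt3Aux

theorem stmt3 {n : ℕ} (c : Fin n → Fin n → Fin n → ℝ) (hc : IsLieSC c)
    (G : Matrix (Fin n) (Fin n) ℝ) (hG : G.PosDef)
    (A : Matrix (Fin n) (Fin n) ℝ) :
    einner G (Rc c G) A = (1/4) * tinner G (deltaE c A) c := by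
  open Stmt3Aux in
  obtain ⟨hskew, -⟩ := hc
  have hdet : IsUnit G.det := isUnit_iff_ne_zero.mpr (ne_of_gt hG.det_pos)
  have hGs : ∀ i j, G i j = G j i := by
    intro i j
    have h := congrFun (congrFun hG.1 i) j
    simpa [Matrix.conjTranspose_apply] using h.symm
  have hBs : ∀ i j, G⁻¹ i j = G⁻¹ j i := by
    intro i j
    have h := congrFun (congrFun hG.1.inv i) j
    simpa [Matrix.conjTranspose_apply] using h.symm
  have hGBe : ∀ l m, (∑ k, G l k * G⁻¹ k m) = if l = m then (1:ℝ) else 0 := by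
    intro l m
    have h := congrFun (congrFun (Matrix.mul_nonsing_inv G hdet) l) m
    simpa [Matrix.mul_apply, Matrix.one_apply] using h
  have key1 : ∀ i l : Fin n, (∑ k, (G⁻¹ * Ricm c G) k i * G k l) = Ricm c G l i := by
    intro i l
    have h1 : ∀ k, (G⁻¹ * Ricm c G) k i * G k l
        = ∑ m, G⁻¹ k m * Ricm c G m i * G k l := by
      intro k; rw [Matrix.mul_apply, Finset.sum_mul]
    rw [Finset.sum_congr rfl fun k _ => h1 k, Finset.sum_comm]
    have h2 : ∀ m, (∑ k, G⁻¹ k m * Ricm c G m i * G k l)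
        = (∑ k, G l k * G⁻¹ k m) * Ricm c G m i := by
      intro m; rw [Finset.sum_mul]
      exact Finset.sum_congr rfl fun k _ => by rw [hGs l k]; ring
    rw [Finset.sum_congr rfl fun m _ => h2 m]
    simp [hGBe]
  have key2 : ∀ (f : Fin n → ℝ) (j : Fin n),
      (∑ i, G⁻¹ i j * ∑ m, f m * G m i) = f j := by
    intro f j
    have h1 : ∀ i, G⁻¹ i j * (∑ m, f m * G m i) = ∑ m, f m * (G m i * G⁻¹ i j) := by
      intro i; rw [Finset.mul_sum]; exact Finset.sum_congr rfl fun m _ => by ring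
    rw [Finset.sum_congr rfl fun i _ => h1 i, Finset.sum_comm]
    have h2 : ∀ m, (∑ i, f m * (G m i * G⁻¹ i j)) = f m * ∑ i, G m i * G⁻¹ i j := by
      intro m; rw [Finset.mul_sum]
    rw [Finset.sum_congr rfl fun m _ => h2 m]
    simp [hGBe]
  -- LHS pieces flattened
  have hA1 : (∑ i, ∑ j, ∑ l, G⁻¹ i j * A l j *
        (∑ p, ∑ q, G⁻¹ p q * gdot G (c l p) (c i q)))
      = ∑ x : I7 n, F1 c G⁻¹ G A x := by
    have hflat : (∑ x : I7 n, F1 c G⁻¹ G A x)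
        = ∑ i, ∑ j, ∑ l, ∑ p, ∑ q, ∑ k, ∑ m,
            G⁻¹ i j * A l j * G⁻¹ p q * c l p k * G k m * c i q m := by
      simp only [F1, Fintype.sum_prod_type]
    rw [hflat]
    refine Finset.sum_congr rfl fun i _ => Finset.sum_congr rfl fun j _ =>
      Finset.sum_congr rfl fun l _ => ?_
    simp only [gdot, Finset.mul_sum]
    refine Finset.sum_congr rfl fun p _ => Finset.sum_congr rfl fun q _ =>
      Finset.sum_congr rfl fun k _ => Finset.sum_congr rfl fun m _ => by ring
  have hA2 : (∑ i, ∑ j, ∑ l, G⁻¹ i j * A l j *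
        (∑ p, ∑ q, ∑ r, ∑ s, G⁻¹ p r * G⁻¹ q s *
          (∑ k, c p q k * G k l) * (∑ m, c r s m * G m i)))
      = ∑ x : I7 n, F2u c G⁻¹ G A x := by
    have hflat : (∑ x : I7 n, F2u c G⁻¹ G A x)
        = ∑ i, ∑ j, ∑ l, ∑ p, ∑ q, ∑ r, ∑ s,
            G⁻¹ i j * A l j * G⁻¹ p r * G⁻¹ q s *
              (∑ k, c p q k * G k l) * (∑ m, c r s m * G m i) := by
      simp only [F2u, Fintype.sum_prod_type]
    rw [hflat]
    refine Finset.sum_congr rfl fun i _ => Finset.sum_congr rfl fun j _ =>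
      Finset.sum_congr rfl fun l _ => ?_
    rw [Finset.mul_sum]
    refine Finset.sum_congr rfl fun p _ => ?_
    rw [Finset.mul_sum]
    refine Finset.sum_congr rfl fun q _ => ?_
    rw [Finset.mul_sum]
    refine Finset.sum_congr rfl fun r _ => ?_
    rw [Finset.mul_sum]
    refine Finset.sum_congr rfl fun s _ => by ring
  have hL : einner G (Rc c G) A
      = -(1/2) * (∑ x : I7 n, F1 c G⁻¹ G A x)
        + (1/4) * (∑ x : I7 n, F2u c G⁻¹ G A x) := by
    calc einner G (Rc c G) A
        = ∑ i, ∑ j, G⁻¹ i j * ∑ l, Ricm c G l i * A l j := by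
          simp only [einner, Rc, gdot]
          refine Finset.sum_congr rfl fun i _ => Finset.sum_congr rfl fun j _ => ?_
          congr 1
          rw [Finset.sum_comm]
          refine Finset.sum_congr rfl fun l _ => ?_
          rw [← Finset.sum_mul, key1 i l]
      _ = ∑ i, ∑ j, ∑ l,
            (-(1/2) * (G⁻¹ i j * A l j * (∑ p, ∑ q, G⁻¹ p q * gdot G (c l p) (c i q)))
              + (1/4) * (G⁻¹ i j * A l j * (∑ p, ∑ q, ∑ r, ∑ s, G⁻¹ p r * G⁻¹ q s *
                  (∑ k, c p q k * G k l) * (∑ m, c r s m * G m i)))) := by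
          refine Finset.sum_congr rfl fun i _ => Finset.sum_congr rfl fun j _ => ?_
          rw [Finset.mul_sum]
          refine Finset.sum_congr rfl fun l _ => ?_
          simp only [Ricm, Matrix.of_apply]
          ring
      _ = -(1/2) * (∑ i, ∑ j, ∑ l, G⁻¹ i j * A l j *
              (∑ p, ∑ q, G⁻¹ p q * gdot G (c l p) (c i q)))
            + (1/4) * (∑ i, ∑ j, ∑ l, G⁻¹ i j * A l j *
              (∑ p, ∑ q, ∑ r, ∑ s, G⁻¹ p r * G⁻¹ q s *
                (∑ k, c p q k * G k l) * (∑ m, c r s m * G m i))) := by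
          simp only [Finset.sum_add_distrib, ← Finset.mul_sum]
      _ = -(1/2) * (∑ x : I7 n, F1 c G⁻¹ G A x)
            + (1/4) * (∑ x : I7 n, F2u c G⁻¹ G A x) := by rw [hA1, hA2]
  have hF2uv : (∑ x : I7 n, F2u c G⁻¹ G A x) = ∑ x : I7 n, F2v c G⁻¹ G A x :=
    Fintype.sum_equiv
      ⟨fun (i, j, l, p, q, r, s) => (p, q, r, s, l, j, i),
       fun (p, q, r, s, l, j, i) => (i, j, l, p, q, r, s),
       fun _ => rfl, fun _ => rfl⟩ _ _
      (fun x => by obtain ⟨i, j, l, p, q, r, s⟩ := x; rfl)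
  have hF2vc : (∑ x : I7 n, F2v c G⁻¹ G A x) = ∑ x : I7 n, F2 c G⁻¹ G A x := by
    calc (∑ x : I7 n, F2v c G⁻¹ G A x)
        = ∑ p, ∑ q, ∑ r, ∑ s, ∑ l, ∑ j, ∑ i,
            G⁻¹ i j * A l j * G⁻¹ p r * G⁻¹ q s *
              (∑ k, c p q k * G k l) * (∑ m, c r s m * G m i) := by
          simp only [F2v, Fintype.sum_prod_type]
      _ = ∑ p, ∑ q, ∑ r, ∑ s, ∑ l, ∑ j, ∑ k,
            G⁻¹ p r * G⁻¹ q s * c p q k * G k l * A l j * c r s j := by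
          refine Finset.sum_congr rfl fun p _ => Finset.sum_congr rfl fun q _ =>
            Finset.sum_congr rfl fun r _ => Finset.sum_congr rfl fun s _ =>
            Finset.sum_congr rfl fun l _ => Finset.sum_congr rfl fun j _ => ?_
          calc (∑ i, G⁻¹ i j * A l j * G⁻¹ p r * G⁻¹ q s *
                  (∑ k, c p q k * G k l) * (∑ m, c r s m * G m i))
              = (A l j * G⁻¹ p r * G⁻¹ q s * (∑ k, c p q k * G k l)) *
                  ∑ i, G⁻¹ i j * ∑ m, c r s m * G m i := by
                rw [Finset.mul_sum]
                exact Finset.sum_congr rfl fun i _ => by ring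
            _ = (A l j * G⁻¹ p r * G⁻¹ q s * (∑ k, c p q k * G k l)) * c r s j := by
                rw [key2 (c r s) j]
            _ = ∑ k, G⁻¹ p r * G⁻¹ q s * c p q k * G k l * A l j * c r s j := by
                rw [Finset.mul_sum, Finset.sum_mul]
                exact Finset.sum_congr rfl fun k _ => by ring
      _ = ∑ x : I7 n, F2 c G⁻¹ G A x := by
          simp only [F2, Fintype.sum_prod_type]
  have hg1 : (∑ x : I7 n, Fg1 c G⁻¹ G A x) = ∑ x : I7 n, F2 c G⁻¹ G A x :=
    (Fintype.sum_equiv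
      ⟨fun (p, q, r, s, l, j, k) => (r, s, p, q, l, k, j),
       fun (p, q, r, s, l, j, k) => (r, s, p, q, l, k, j),
       fun _ => rfl, fun _ => rfl⟩ _ _
      (fun x => by
        obtain ⟨p, q, r, s, l, j, k⟩ := x
        simp only [F2, Fg1, Equiv.coe_fn_mk]
        rw [hGs k l, hBs p r, hBs q s]; ring)).symm
  have hg2 : (∑ x : I7 n, Fg2 c G⁻¹ G A x) = ∑ x : I7 n, F1 c G⁻¹ G A x :=
    Fintype.sum_equiv
      ⟨fun (i, j, p, q, k, m, l) => (p, i, l, j, q, k, m),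
       fun (a, b, d, e, f, g, h) => (b, e, a, f, g, h, d),
       fun _ => rfl, fun _ => rfl⟩ _ _
      (fun x => by
        obtain ⟨i, j, p, q, k, m, l⟩ := x
        simp only [F1, Fg2, Equiv.coe_fn_mk]
        rw [hBs i p]; ring)
  have hg3 : (∑ x : I7 n, Fg3 c G⁻¹ G A x) = ∑ x : I7 n, F1 c G⁻¹ G A x :=
    Fintype.sum_equiv
      ⟨fun (i, j, p, q, k, m, l) => (q, j, l, i, p, k, m),
       fun (a, b, d, e, f, g, h) => (e, b, f, a, g, h, d),
       fun _ => rfl, fun _ => rfl⟩ _ _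
      (fun x => by
        obtain ⟨i, j, p, q, k, m, l⟩ := x
        simp only [F1, Fg3, Equiv.coe_fn_mk]
        rw [hskew i l k, hskew p q m, hBs j q]; ring)
  have hT : tinner G (deltaE c A) c
      = (∑ x : I7 n, Fg1 c G⁻¹ G A x) - (∑ x : I7 n, Fg2 c G⁻¹ G A x)
        - (∑ x : I7 n, Fg3 c G⁻¹ G A x) := by
    calc tinner G (deltaE c A) c
        = ∑ i, ∑ j, ∑ p, ∑ q, ∑ k, ∑ m, ∑ l,
            (Fg1 c G⁻¹ G A (i, j, p, q, k, m, l) - Fg2 c G⁻¹ G A (i, j, p, q, k, m, l)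
              - Fg3 c G⁻¹ G A (i, j, p, q, k, m, l)) := by
          simp only [tinner, gdot]
          refine Finset.sum_congr rfl fun i _ => Finset.sum_congr rfl fun j _ =>
            Finset.sum_congr rfl fun p _ => Finset.sum_congr rfl fun q _ => ?_
          rw [Finset.mul_sum]
          refine Finset.sum_congr rfl fun k _ => ?_
          rw [Finset.mul_sum]
          refine Finset.sum_congr rfl fun m _ => ?_
          simp only [deltaE, Fg1, Fg2, Fg3, sub_mul, Finset.sum_mul, mul_sub,
            Finset.mul_sum, ← Finset.sum_sub_distrib]
          exact Finset.sum_congr rfl fun l _ => by ring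
      _ = ∑ x : I7 n, (Fg1 c G⁻¹ G A x - Fg2 c G⁻¹ G A x - Fg3 c G⁻¹ G A x) := by
          simp only [Fintype.sum_prod_type]
      _ = _ := by simp only [Finset.sum_sub_distrib]
  rw [hL, hF2uv, hF2vc, hT, hg1, hg2, hg3]
  ring
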